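/- arXiv:1501.03526 — 2 statements merged into one kernel-verified Lean document; each statement's English description precedes it below -/
import Mathlib

section
/- Let p be an odd prime, phi the quadratic character, ε the trivial character on F_p, and t ∈ F_p with t ∉ {0,1}. Then Greene's hypergeometric series satisfies ₂F₁(phi, ε; phi | t) = -(1/p)·phi(-t) - (1/p)·phi(-1). -/
open Finset

noncomputable def phiChar (p : ℕ) [Fact p.Prime] : MulChar (ZMod p) ℂ :=
  (quadraticChar (ZMod p)).ringHomComp (Int.castRingHom ℂ)

noncomputable def gbinom {p : ℕ} [Fact p.Prime] (A B : MulChar (ZMod p) ℂ) : ℂ :=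
  (B (-1) / p) * jacobiSum A B⁻¹

noncomputable def twoF1 {p : ℕ} [Fact p.Prime] (A B C : MulChar (ZMod p) ℂ) (x : ZMod p) : ℂ :=
  ((p : ℂ) / (p - 1)) * ∑ χ : MulChar (ZMod p) ℂ, gbinom (A * χ) χ * gbinom (B * χ) (C * χ) * χ x

variable {p : ℕ} [Fact p.Prime]

lemma phi_quad (p : ℕ) [Fact p.Prime] : (phiChar p).IsQuadratic :=
  (quadraticChar_isQuadratic _).comp _

lemma phi_inv (p : ℕ) [Fact p.Prime] : (phiChar p)⁻¹ = phiChar p := (phi_quad p).inv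

lemma phi_ne_zero {x : ZMod p} (hx : x ≠ 0) : phiChar p x ≠ 0 := by
  have h : quadraticChar (ZMod p) x ≠ 0 := fun h0 => hx (quadraticChar_eq_zero_iff.mp h0)
  simp only [phiChar, MulChar.ringHomComp_apply, eq_intCast, Int.cast_eq_zero]
  exact_mod_cast h

lemma phi_mul_self {x : ZMod p} (hx : x ≠ 0) : phiChar p x * phiChar p x = 1 := by
  have h := congrArg (fun χ : MulChar (ZMod p) ℂ => χ x) (phi_quad p).sq_eq_one
  simpa [pow_two, MulChar.one_apply hx.isUnit] using h

lemma phi_ne_one (hp : p ≠ 2) : phiChar p ≠ 1 := by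
  obtain ⟨a, ha⟩ := quadraticChar_exists_neg_one (F := ZMod p)
    (by rwa [ZMod.ringChar_zmod_n])
  intro h
  have ha0 : a ≠ 0 := fun h0 => by simp [h0] at ha
  have h2 := congrArg (fun χ : MulChar (ZMod p) ℂ => χ a) h
  simp only [phiChar, MulChar.ringHomComp_apply, ha,
    MulChar.one_apply ha0.isUnit] at h2
  norm_num at h2

lemma phi_sum (hp : p ≠ 2) : ∑ x : ZMod p, phiChar p x = 0 :=
  MulChar.sum_eq_zero_of_ne_one (phi_ne_one hp)

lemma orth (t x y : ZMod p) (ht0 : t ≠ 0) :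
    ∑ χ : MulChar (ZMod p) ℂ, χ x * χ⁻¹ (1 - x) * (χ y * χ⁻¹ (1 - y)) * χ t =
      if x ≠ 0 ∧ x ≠ 1 ∧ y ≠ 0 ∧ y ≠ 1 ∧ x * y * t = (1 - x) * (1 - y) then
        ((p - 1 : ℕ) : ℂ) else 0 := by
  by_cases hx0 : x = 0
  · simp [hx0, MulChar.map_zero]
  by_cases hx1 : x = 1
  · simp [hx1, MulChar.map_zero]
  by_cases hy0 : y = 0
  · simp [hy0, MulChar.map_zero, hx0]
  by_cases hy1 : y = 1
  · simp [hy1, MulChar.map_zero, hx0, hx1, hy0]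
  have h1x : (1 : ZMod p) - x ≠ 0 := sub_ne_zero.mpr (Ne.symm hx1)
  have h1y : (1 : ZMod p) - y ≠ 0 := sub_ne_zero.mpr (Ne.symm hy1)
  have key : ∀ χ : MulChar (ZMod p) ℂ,
      χ x * χ⁻¹ (1 - x) * (χ y * χ⁻¹ (1 - y)) * χ t =
        χ (x * (1 - x)⁻¹ * (y * (1 - y)⁻¹) * t) := by
    intro χ
    rw [MulChar.inv_apply', MulChar.inv_apply', map_mul, map_mul, map_mul, map_mul]
  rw [Finset.sum_congr rfl fun χ _ => key χ]
  have horth := DirichletCharacter.sum_characters_eq ℂ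
    (n := p) (x * (1 - x)⁻¹ * (y * (1 - y)⁻¹) * t)
  rw [horth, Nat.totient_prime (Fact.out : p.Prime)]
  have hiff : x * (1 - x)⁻¹ * (y * (1 - y)⁻¹) * t = 1 ↔
      x * y * t = (1 - x) * (1 - y) := by
    have hrw : x * (1 - x)⁻¹ * (y * (1 - y)⁻¹) * t =
        (x * y * t) / ((1 - x) * (1 - y)) := by field_simp
    rw [hrw, div_eq_one_iff_eq (mul_ne_zero h1x h1y)]
  rw [if_congr hiff rfl rfl]
  by_cases h : x * y * t = (1 - x) * (1 - y) <;> simp [h, hx0, hx1, hy0, hy1]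

lemma innerY (t x : ZMod p) (ht0 : t ≠ 0) (hx0 : x ≠ 0) (hx1 : x ≠ 1) :
    ∑ y : ZMod p, (if x ≠ 0 ∧ x ≠ 1 ∧ y ≠ 0 ∧ y ≠ 1 ∧ x * y * t = (1 - x) * (1 - y)
        then phiChar p x * phiChar p (1 - y) else 0) =
      phiChar p t * phiChar p (x * (t - 1) + 1) := by
  have h1x : (1 : ZMod p) - x ≠ 0 := sub_ne_zero.mpr (Ne.symm hx1)
  set D : ZMod p := x * (t - 1) + 1 with hD
  by_cases hD0 : D = 0
  · rw [hD0, (phiChar p).map_zero, mul_zero]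
    refine Finset.sum_eq_zero fun y _ => ?_
    rw [if_neg]
    rintro ⟨-, -, -, -, heq⟩
    have : y * D = 1 - x := by rw [hD]; linear_combination heq
    rw [hD0, mul_zero] at this
    exact h1x this.symm
  · set y₀ : ZMod p := (1 - x) / D with hy₀
    have hy00 : y₀ ≠ 0 := div_ne_zero h1x hD0
    have hy01 : y₀ ≠ 1 := by
      intro h
      rw [hy₀, div_eq_one_iff_eq hD0] at h
      have hxt : x * t = 0 := by linear_combination -h
      rcases mul_eq_zero.mp hxt with h' | h'
      exacts [hx0 h', ht0 h']
    have hcond : ∀ y : ZMod p,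
        (x ≠ 0 ∧ x ≠ 1 ∧ y ≠ 0 ∧ y ≠ 1 ∧ x * y * t = (1 - x) * (1 - y)) ↔ y = y₀ := by
      intro y
      constructor
      · rintro ⟨-, -, -, -, heq⟩
        have : y * D = 1 - x := by rw [hD]; linear_combination heq
        rw [hy₀, eq_div_iff hD0]
        exact this
      · rintro rfl
        refine ⟨hx0, hx1, hy00, hy01, ?_⟩
        rw [hy₀]
        field_simp
        ring
    calc ∑ y : ZMod p, (if x ≠ 0 ∧ x ≠ 1 ∧ y ≠ 0 ∧ y ≠ 1 ∧ x * y * t = (1 - x) * (1 - y)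
          then phiChar p x * phiChar p (1 - y) else 0)
        = ∑ y : ZMod p, (if y = y₀ then phiChar p x * phiChar p (1 - y) else 0) := by
          exact Finset.sum_congr rfl fun y _ => if_congr (hcond y) rfl rfl
      _ = phiChar p x * phiChar p (1 - y₀) := by
          rw [Finset.sum_ite_eq' Finset.univ y₀ (fun y => phiChar p x * phiChar p (1 - y))]
          simp
      _ = phiChar p t * phiChar p D := by
          have h1y0 : 1 - y₀ = (x * t) / D := by
            rw [hy₀]; field_simp; rw [hD]; ring
          have hDinv : phiChar p D⁻¹ = phiChar p D := by
            have h1 : phiChar p D⁻¹ * phiChar p D = 1 := by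
              rw [← map_mul, inv_mul_cancel₀ hD0, map_one]
            rw [← mul_one (phiChar p D⁻¹), ← phi_mul_self hD0, ← mul_assoc, h1, one_mul]
          rw [h1y0, div_eq_mul_inv, map_mul, map_mul, hDinv,
            show phiChar p x * (phiChar p x * phiChar p t * phiChar p D) =
              (phiChar p x * phiChar p x) * (phiChar p t * phiChar p D) from by ring,
            phi_mul_self hx0, one_mul]

lemma curveSum (hp : p ≠ 2) (t : ZMod p) (ht0 : t ≠ 0) (ht1 : t ≠ 1) :
    ∑ x : ZMod p, ∑ y : ZMod p,
        (if x ≠ 0 ∧ x ≠ 1 ∧ y ≠ 0 ∧ y ≠ 1 ∧ x * y * t = (1 - x) * (1 - y)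
          then phiChar p x * phiChar p (1 - y) else 0) =
      -(phiChar p t) - 1 := by
  have ht1' : t - 1 ≠ 0 := sub_ne_zero.mpr ht1
  have h01 : (0 : ZMod p) ≠ 1 := by
    have : Nontrivial (ZMod p) := inferInstance
    exact zero_ne_one
  have step1 : ∀ x : ZMod p, ∑ y : ZMod p,
      (if x ≠ 0 ∧ x ≠ 1 ∧ y ≠ 0 ∧ y ≠ 1 ∧ x * y * t = (1 - x) * (1 - y)
        then phiChar p x * phiChar p (1 - y) else 0) =
      (if x ≠ 0 ∧ x ≠ 1 then phiChar p t * phiChar p (x * (t - 1) + 1) else 0) := by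
    intro x
    by_cases hx0 : x = 0
    · simp [hx0]
    by_cases hx1 : x = 1
    · simp [hx1]
    rw [if_pos ⟨hx0, hx1⟩]
    exact innerY t x ht0 hx0 hx1
  rw [Finset.sum_congr rfl fun x _ => step1 x]
  have hbij : Function.Bijective (fun x : ZMod p => x * (t - 1) + 1) := by
    refine Finite.injective_iff_bijective.mp fun a b h => ?_
    exact mul_right_cancel₀ ht1' (add_right_cancel h)
  have hsum0 : ∑ x : ZMod p, phiChar p (x * (t - 1) + 1) = 0 := by
    rw [Fintype.sum_bijective _ hbij _ (phiChar p) fun x => rfl]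
    exact phi_sum hp
  have hsplit : ∀ x : ZMod p,
      (if x ≠ 0 ∧ x ≠ 1 then phiChar p t * phiChar p (x * (t - 1) + 1) else 0) =
      phiChar p t * phiChar p (x * (t - 1) + 1)
        - (if x = 0 then phiChar p t * phiChar p (0 * (t - 1) + 1) else 0)
        - (if x = 1 then phiChar p t * phiChar p (1 * (t - 1) + 1) else 0) := by
    intro x
    by_cases hx0 : x = 0
    · subst hx0
      rw [if_neg (fun h => h.1 rfl), if_pos rfl, if_neg h01]
      ring
    by_cases hx1 : x = 1
    · subst hx1
      rw [if_neg (fun h => h.2 rfl), if_neg (Ne.symm h01), if_pos rfl]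
      ring
    · rw [if_pos ⟨hx0, hx1⟩, if_neg hx0, if_neg hx1]
      ring
  rw [Finset.sum_congr rfl fun x _ => hsplit x]
  rw [Finset.sum_sub_distrib, Finset.sum_sub_distrib, ← Finset.mul_sum, hsum0, mul_zero]
  rw [Finset.sum_ite_eq' Finset.univ (0 : ZMod p)
    (fun _ => phiChar p t * phiChar p (0 * (t - 1) + 1))]
  rw [Finset.sum_ite_eq' Finset.univ (1 : ZMod p)
    (fun _ => phiChar p t * phiChar p (1 * (t - 1) + 1))]
  simp only [Finset.mem_univ, if_pos]
  have e0 : (0 : ZMod p) * (t - 1) + 1 = 1 := by ring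
  have e1 : (1 : ZMod p) * (t - 1) + 1 = t := by ring
  rw [e0, e1, map_one, mul_one, phi_mul_self ht0]
  ring

lemma summand (t : ZMod p) (χ : MulChar (ZMod p) ℂ) :
    gbinom (phiChar p * χ) χ * gbinom (1 * χ) (phiChar p * χ) * χ t =
      (phiChar p (-1) / (p : ℂ) ^ 2) * ∑ x : ZMod p, ∑ y : ZMod p,
        (phiChar p x * phiChar p (1 - y)) *
          (χ x * χ⁻¹ (1 - x) * (χ y * χ⁻¹ (1 - y)) * χ t) := by
  have hm1 : χ (-1) * χ (-1) = 1 := by rw [← map_mul]; norm_num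
  have hdsum : ∑ x : ZMod p, ∑ y : ZMod p,
      (phiChar p x * phiChar p (1 - y)) *
        (χ x * χ⁻¹ (1 - x) * (χ y * χ⁻¹ (1 - y)) * χ t) =
      (jacobiSum (phiChar p * χ) χ⁻¹ * jacobiSum χ (phiChar p * χ⁻¹)) * χ t := by
    rw [jacobiSum, jacobiSum, Finset.sum_mul_sum, Finset.sum_mul]
    refine Finset.sum_congr rfl fun x _ => ?_
    rw [Finset.sum_mul]
    refine Finset.sum_congr rfl fun y _ => ?_
    simp only [MulChar.coeToFun_mul, Pi.mul_apply]
    ring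
  rw [gbinom, gbinom, one_mul, mul_inv, phi_inv]
  rw [show (χ (-1) / ↑p * jacobiSum (phiChar p * χ) χ⁻¹) *
      ((phiChar p * χ) (-1) / ↑p * jacobiSum χ (phiChar p * χ⁻¹)) * χ t =
      (χ (-1) * (phiChar p * χ) (-1)) / (p : ℂ) ^ 2 *
        ((jacobiSum (phiChar p * χ) χ⁻¹ * jacobiSum χ (phiChar p * χ⁻¹)) * χ t) from by ring]
  rw [hdsum]
  congr 1
  rw [MulChar.mul_apply, show χ (-1) * (phiChar p (-1) * χ (-1)) =
    phiChar p (-1) * (χ (-1) * χ (-1)) from by ring, hm1, mul_one]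

theorem stmt_12 (p : ℕ) [Fact p.Prime] (hp : p ≠ 2) (t : ZMod p) (ht0 : t ≠ 0)
    (ht1 : t ≠ 1) :
    twoF1 (phiChar p) 1 (phiChar p) t =
      -(1 / p) * phiChar p (-t) - (1 / p) * phiChar p (-1) := by
  have hp2 : 2 ≤ p := (Fact.out : p.Prime).two_le
  have hP0 : (p : ℂ) ≠ 0 := Nat.cast_ne_zero.mpr (Fact.out : p.Prime).ne_zero
  have hP1 : (p : ℂ) - 1 ≠ 0 := by
    intro h
    have : (p : ℂ) = ((1 : ℕ) : ℂ) := by rw [Nat.cast_one]; linear_combination h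
    exact (Fact.out : p.Prime).one_lt.ne' (Nat.cast_injective this)
  have hcast : ((p - 1 : ℕ) : ℂ) = (p : ℂ) - 1 := by
    rw [Nat.cast_sub (le_trans one_le_two hp2), Nat.cast_one]
  rw [twoF1]
  rw [Finset.sum_congr rfl fun χ _ => summand t χ, ← Finset.mul_sum]
  have hswap : (∑ χ : MulChar (ZMod p) ℂ, ∑ x : ZMod p, ∑ y : ZMod p,
      (phiChar p x * phiChar p (1 - y)) *
        (χ x * χ⁻¹ (1 - x) * (χ y * χ⁻¹ (1 - y)) * χ t)) =
      ∑ x : ZMod p, ∑ y : ZMod p, ∑ χ : MulChar (ZMod p) ℂ,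
      (phiChar p x * phiChar p (1 - y)) *
        (χ x * χ⁻¹ (1 - x) * (χ y * χ⁻¹ (1 - y)) * χ t) := by
    rw [Finset.sum_comm]
    exact Finset.sum_congr rfl fun x _ => Finset.sum_comm
  rw [hswap]
  have hinner : ∀ x y : ZMod p,
      ∑ χ : MulChar (ZMod p) ℂ, (phiChar p x * phiChar p (1 - y)) *
          (χ x * χ⁻¹ (1 - x) * (χ y * χ⁻¹ (1 - y)) * χ t) =
        ((p - 1 : ℕ) : ℂ) *
          (if x ≠ 0 ∧ x ≠ 1 ∧ y ≠ 0 ∧ y ≠ 1 ∧ x * y * t = (1 - x) * (1 - y)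
            then phiChar p x * phiChar p (1 - y) else 0) := by
    intro x y
    rw [← Finset.mul_sum, orth t x y ht0]
    by_cases h : x ≠ 0 ∧ x ≠ 1 ∧ y ≠ 0 ∧ y ≠ 1 ∧ x * y * t = (1 - x) * (1 - y)
    · rw [if_pos h, if_pos h]; ring
    · rw [if_neg h, if_neg h]; ring
  rw [Finset.sum_congr rfl fun x _ => Finset.sum_congr rfl fun y _ => hinner x y]
  simp only [← Finset.mul_sum]
  rw [curveSum hp t ht0 ht1, hcast]
  have hneg : phiChar p (-t) = phiChar p (-1) * phiChar p t := by
    rw [← map_mul, neg_one_mul]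
  rw [hneg]
  field_simp
end

section
/- Let p be an odd prime and λ ∈ F_p with λ ∉ {0,1}. Then Σ_{x∈F_p} phi(x)phi(x-1)phi(x-λ) = p·phi(-1)·₂F₁(phi,phi;ε|λ), where phi is the quadratic character and ₂F₁ Greene's hypergeometric series; equivalently, the Legendre curve y²=x(x-1)(x-λ) has 1 + p + p·phi(-1)·₂F₁(phi,phi;ε|λ) points over F_p including the point at infinity. -/
/-!
The substitution `s = (1 - x)⁻¹` turns the Jacobi sum into `J(ψχ, χ⁻¹) = ∑ₓ ψ(1 - x) χ⁻¹(-x)`,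
the multiplicative Fourier transform of `x ↦ ψ(1 - x)`. Since Greene's binomial coefficients are
`χ(-1) J / p` and `χ(-1)² = 1`, the series `₂F₁(ψ, ψ; ε | λ)` is a multiple of
`∑_χ J(ψχ, χ⁻¹)² χ(λ)`, and orthogonality of characters collapses this to the multiplicative
convolution `(p - 1) ∑_{x ≠ 0} ψ(1 - x) ψ(1 - λ / x)`, which is `ψ(-1)` times the Legendre sum.
The point count follows because `y² = a` has `1 + ψ(a)` solutions.
-/

open Finset

section Field

variable {F R : Type*} [Field F] [Fintype F] [CommRing R]

theorem jacobiSum_mul_inv_eq_sum (ψ χ : MulChar F R) :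
    jacobiSum (ψ * χ) χ⁻¹ = ∑ x, ψ⁻¹ (1 - x) * χ⁻¹ (-x) := by
  rw [jacobiSum, ← ((Equiv.subLeft 1).trans (Equiv.inv F)).sum_comp]
  refine sum_congr rfl fun x _ => ?_
  simp only [Equiv.trans_apply, Equiv.subLeft_apply, Equiv.inv_apply, MulChar.coeToFun_mul,
    Pi.mul_apply, MulChar.inv_apply']
  rcases eq_or_ne (1 - x) 0 with hx | hx
  · simp [hx, MulChar.map_zero]
  · rw [mul_assoc, ← map_mul, ← mul_inv, mul_sub, mul_inv_cancel₀ hx, mul_one,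
      sub_sub_cancel_left]

theorem sum_ite_mul_eq [DecidableEq F] {M : Type*} [AddCommMonoid M] {lam : F} (hlam : lam ≠ 0)
    (g : F → M) (x : F) :
    ∑ y, (if x * y = lam then g y else 0) = if x = 0 then 0 else g (lam / x) := by
  split_ifs with hx
  · simp [hx, hlam.symm]
  · have hy : ∀ y, x * y = lam ↔ y = lam / x := fun y => by rw [eq_div_iff hx, mul_comm]
    simp_rw [hy, sum_ite_eq', mem_univ, if_true]

end Field

section Quadratic

variable {F R : Type*} [Field F] [CommRing R] {ψ : MulChar F R}

theorem MulChar.IsQuadratic.apply_inv (hψ : ψ.IsQuadratic) (a : F) : ψ a⁻¹ = ψ a := by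
  rw [← MulChar.inv_apply', hψ.inv]

theorem MulChar.IsQuadratic.apply_mul_self (hψ : ψ.IsQuadratic) {a : F} (ha : a ≠ 0) :
    ψ a * ψ a = 1 := by
  have h := map_mul ψ a a⁻¹
  rwa [mul_inv_cancel₀ ha, map_one, hψ.apply_inv, eq_comm] at h

theorem MulChar.IsQuadratic.sum_one_sub_mul_one_sub_div [Fintype F] [DecidableEq F]
    (hψ : ψ.IsQuadratic) (lam : F) :
    ∑ x ∈ {0}ᶜ, ψ (1 - x) * ψ (1 - lam / x) =
      ψ (-1) * ∑ x, ψ x * ψ (x - 1) * ψ (x - lam) := by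
  rw [mul_sum, ← sum_subset (subset_univ {0}ᶜ) fun x _ hx => by simp_all]
  refine sum_congr rfl fun x hx => ?_
  have hx : x ≠ 0 := by simpa using hx
  have h1 : 1 - x = -1 * (x - 1) := by ring
  have h2 : 1 - lam / x = x⁻¹ * (x - lam) := by field_simp
  rw [h1, h2, map_mul, map_mul, hψ.apply_inv]
  ring

end Quadratic

section ZMod

variable {p : ℕ} [Fact p.Prime]

theorem sum_mulChar_apply_eq_ite (a : ZMod p) :
    ∑ χ : MulChar (ZMod p) ℂ, χ a = if a = 1 then (p : ℂ) - 1 else 0 := by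
  have : NeZero p := ⟨(Fact.out : p.Prime).ne_zero⟩
  rw [DirichletCharacter.sum_characters_eq, Nat.totient_prime Fact.out,
    Nat.cast_sub (Fact.out : p.Prime).one_le, Nat.cast_one]

theorem sum_mulChar_sq_mul_apply (f : ZMod p → ℂ) {lam : ZMod p} (hlam : lam ≠ 0) :
    ∑ χ : MulChar (ZMod p) ℂ, (∑ x, f x * χ⁻¹ (-x)) ^ 2 * χ lam =
      ((p : ℂ) - 1) * ∑ x ∈ {0}ᶜ, f x * f (lam / x) := by
  have hterm : ∀ (χ : MulChar (ZMod p) ℂ) x y,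
      f x * χ⁻¹ (-x) * (f y * χ⁻¹ (-y)) * χ lam = f x * f y * χ (lam / (x * y)) := by
    intro χ x y
    have h : lam / (x * y) = (-x)⁻¹ * (-y)⁻¹ * lam := by ring
    rw [h, map_mul, map_mul, MulChar.inv_apply', MulChar.inv_apply']
    ring
  have horth : ∀ x y : ZMod p, ∑ χ : MulChar (ZMod p) ℂ, χ (lam / (x * y)) =
      if x * y = lam then (p : ℂ) - 1 else 0 := by
    intro x y
    rw [sum_mulChar_apply_eq_ite]
    rcases eq_or_ne (x * y) 0 with hxy | hxy
    · simp [hxy, hlam.symm]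
    · exact if_congr ((div_eq_one_iff_eq hxy).trans eq_comm) rfl rfl
  calc ∑ χ : MulChar (ZMod p) ℂ, (∑ x, f x * χ⁻¹ (-x)) ^ 2 * χ lam
      = ∑ x, ∑ y, f x * f y * ∑ χ : MulChar (ZMod p) ℂ, χ (lam / (x * y)) := by
        simp_rw [sq, sum_mul_sum, sum_mul, hterm, mul_sum]
        rw [sum_comm]
        exact sum_congr rfl fun _ _ => sum_comm
    _ = ((p : ℂ) - 1) * ∑ x, ∑ y, if x * y = lam then f x * f y else 0 := by
        simp_rw [horth, mul_sum]
        refine sum_congr rfl fun x _ => sum_congr rfl fun y _ => ?_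
        split_ifs <;> ring
    _ = ((p : ℂ) - 1) * ∑ x ∈ {0}ᶜ, f x * f (lam / x) := by
        simp_rw [sum_ite_mul_eq hlam]
        rw [sum_ite, sum_const_zero, zero_add]
        exact congrArg _ (sum_congr (by ext; simp) fun _ _ => rfl)

end ZMod

section Hypergeometric

variable {p : ℕ} [Fact p.Prime]

theorem gbinom_mul_self (A χ : MulChar (ZMod p) ℂ) :
    gbinom A χ * gbinom A χ = jacobiSum A χ⁻¹ ^ 2 / (p : ℂ) ^ 2 := by
  have h : χ (-1) * χ (-1) = 1 := by rw [← map_mul, neg_mul_neg, one_mul, map_one]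
  rw [gbinom]
  linear_combination (jacobiSum A χ⁻¹ ^ 2 / (p : ℂ) ^ 2) * h

theorem twoF1_eq_of_isQuadratic {ψ : MulChar (ZMod p) ℂ} (hψ : ψ.IsQuadratic) {lam : ZMod p}
    (hlam : lam ≠ 0) :
    twoF1 ψ ψ 1 lam = ψ (-1) / p * ∑ x, ψ x * ψ (x - 1) * ψ (x - lam) := by
  have hp : (p : ℂ) ≠ 0 := Nat.cast_ne_zero.mpr (Fact.out : p.Prime).ne_zero
  have hp1 : (p : ℂ) - 1 ≠ 0 := sub_ne_zero.mpr (by exact_mod_cast (Fact.out : p.Prime).ne_one)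
  simp_rw [twoF1, one_mul, gbinom_mul_self, jacobiSum_mul_inv_eq_sum, hψ.inv, div_mul_eq_mul_div,
    ← sum_div, sum_mulChar_sq_mul_apply (fun x => ψ (1 - x)) hlam,
    hψ.sum_one_sub_mul_one_sub_div]
  field_simp

end Hypergeometric

section PointCount

variable {F : Type*} [Field F] [Fintype F] [DecidableEq F]

theorem card_sq_eq_apply_eq_card_add_sum_quadraticChar (hF : ringChar F ≠ 2) (g : F → F) :
    (#{xy : F × F | xy.2 ^ 2 = g xy.1} : ℤ) = Fintype.card F + ∑ x, quadraticChar F (g x) := by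
  have hfiber : ∀ a, (#{y : F | y ^ 2 = a} : ℤ) = quadraticChar F a + 1 := fun a => by
    simpa [Set.toFinset_ofPred] using quadraticChar_card_sqrts hF a
  calc (#{xy : F × F | xy.2 ^ 2 = g xy.1} : ℤ)
      = ∑ x, (#{y : F | y ^ 2 = g x} : ℤ) := by
        simp only [card_filter, Fintype.sum_prod_type]
        push_cast
        rfl
    _ = Fintype.card F + ∑ x, quadraticChar F (g x) := by
        simp_rw [hfiber, sum_add_distrib, sum_const, card_univ]
        simp [add_comm]

end PointCount

theorem stmt_18_general (p : ℕ) [Fact p.Prime] (hp : p ≠ 2) (lam : ZMod p) (h0 : lam ≠ 0) :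
    (∑ x : ZMod p, phiChar p x * phiChar p (x - 1) * phiChar p (x - lam)) =
      (p : ℂ) * phiChar p (-1) * twoF1 (phiChar p) (phiChar p) 1 lam ∧
    ((univ.filter (fun xy : ZMod p × ZMod p =>
        xy.2 ^ 2 = xy.1 * (xy.1 - 1) * (xy.1 - lam))).card : ℂ) + 1 =
      1 + (p : ℂ) + p * phiChar p (-1) * twoF1 (phiChar p) (phiChar p) 1 lam := by
  have hφ : (phiChar p).IsQuadratic := (quadraticChar_isQuadratic _).comp _
  have hsum : (∑ x : ZMod p, phiChar p x * phiChar p (x - 1) * phiChar p (x - lam)) =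
      (p : ℂ) * phiChar p (-1) * twoF1 (phiChar p) (phiChar p) 1 lam := by
    have hp0 : (p : ℂ) ≠ 0 := Nat.cast_ne_zero.mpr (Fact.out : p.Prime).ne_zero
    rw [twoF1_eq_of_isQuadratic hφ h0]
    field_simp
    linear_combination (-∑ x : ZMod p, phiChar p x * phiChar p (x - 1) * phiChar p (x - lam)) *
      hφ.apply_mul_self (neg_ne_zero.mpr one_ne_zero)
  refine ⟨hsum, ?_⟩
  have hcount : (#{xy : ZMod p × ZMod p | xy.2 ^ 2 = xy.1 * (xy.1 - 1) * (xy.1 - lam)} : ℂ) =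
      p + ∑ x : ZMod p, phiChar p (x * (x - 1) * (x - lam)) := by
    have hF : ringChar (ZMod p) ≠ 2 := by rwa [ZMod.ringChar_zmod_n]
    have h := card_sq_eq_apply_eq_card_add_sum_quadraticChar hF fun x => x * (x - 1) * (x - lam)
    simpa only [phiChar, MulChar.ringHomComp_apply, eq_intCast, ZMod.card, Int.cast_add,
      Int.cast_natCast, Int.cast_sum] using congrArg (Int.cast : ℤ → ℂ) h
  simp only [map_mul] at hcount
  rw [hcount, hsum]
  ring

theorem stmt_18 (p : ℕ) [Fact p.Prime] (hp : p ≠ 2) (lam : ZMod p) (h0 : lam ≠ 0)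
    (h1 : lam ≠ 1) :
    (∑ x : ZMod p, phiChar p x * phiChar p (x - 1) * phiChar p (x - lam)) =
      (p : ℂ) * phiChar p (-1) * twoF1 (phiChar p) (phiChar p) 1 lam ∧
    ((univ.filter (fun xy : ZMod p × ZMod p =>
        xy.2 ^ 2 = xy.1 * (xy.1 - 1) * (xy.1 - lam))).card : ℂ) + 1 =
      1 + (p : ℂ) + p * phiChar p (-1) * twoF1 (phiChar p) (phiChar p) 1 lam :=
  stmt_18_general p hp lam h0
end
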